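/- Let ρ^ε be a Borel probability measure on 𝒳 with finite second moment, absolutely continuous with respect to ρ, with ‖1 − dρ^ε/dρ‖_{L^∞(ρ)} ≤ ε for some 0 < ε < 1, and let f ∈ L²(ρ) ∩ L²(ρ^ε). Let μ† ∈ M(Ω) satisfy L_ρ(f − Kμ†) = 0 on Ω. Then for every ν ∈ M(Ω), the quantity ∫_Ω L_{ρ^ε}(f − Kν) d(ν − μ†) is strictly negative whenever ‖f − Kν‖_{L²(ρ)} > ((1+ε)/(1−ε)) ‖f − Kμ†‖_{L²(ρ)}. -/

import Mathlib

open MeasureTheory RealInnerProductSpace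

noncomputable section

/-- Integral of a real function against a signed measure, via the Jordan decomposition. -/
def sInt {α : Type*} [MeasurableSpace α] (μ : SignedMeasure α) (g : α → ℝ) : ℝ :=
  (∫ w, g w ∂μ.toJordanDecomposition.posPart) - ∫ w, g w ∂μ.toJordanDecomposition.negPart

/-- Total variation norm of a signed measure. -/
def tvNorm {α : Type*} [MeasurableSpace α] (μ : SignedMeasure α) : ℝ :=
  (μ.totalVariation Set.univ).toReal

/-- Input space ℝ^d. -/
abbrev Ed (d : ℕ) := EuclideanSpace ℝ (Fin d)

/-- Parameter space ℝ^d × ℝ. -/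
abbrev Pd (d : ℕ) := EuclideanSpace ℝ (Fin d) × ℝ

/-- The weight V(a,b) = 1 + ‖a‖ + |b|. -/
def Vw {d : ℕ} (w : Pd d) : ℝ := 1 + ‖w.1‖ + |w.2|

/-- The Barron-norm functional J(μ) = ∫ V d|μ|. -/
def Jfun {d : ℕ} {Ω : Set (Pd d)} (μ : SignedMeasure ↥Ω) : ℝ :=
  ∫ w, Vw (w : Pd d) ∂μ.totalVariation

/-- (Kμ)(x) = ∫_Ω σ(aᵀx + b) dμ(a,b). -/
def Kop {d : ℕ} (σ : ℝ → ℝ) {Ω : Set (Pd d)} (μ : SignedMeasure ↥Ω) (x : Ed d) : ℝ :=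
  sInt μ (fun w => σ (⟪(w : Pd d).1, x⟫ + (w : Pd d).2))

/-- (L_ρ φ)(a,b) = ∫ φ(x) σ(aᵀx + b) dρ(x). -/
def Lop {d : ℕ} (σ : ℝ → ℝ) (ρ : Measure (Ed d)) (φ : Ed d → ℝ) (w : Pd d) : ℝ :=
  ∫ x, φ x * σ (⟪w.1, x⟫ + w.2) ∂ρ

/-- Squared L²(ρ) norm. -/
def L2sq {d : ℕ} (ρ : Measure (Ed d)) (g : Ed d → ℝ) : ℝ := ∫ x, g x ^ 2 ∂ρ

/-- L²(ρ) norm. -/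
def L2norm {d : ℕ} (ρ : Measure (Ed d)) (g : Ed d → ℝ) : ℝ := Real.sqrt (L2sq ρ g)

/-- The loss R_f(μ) = ½‖Kμ − f‖²_{L²(ρ)}. -/
def Rf {d : ℕ} (σ : ℝ → ℝ) {Ω : Set (Pd d)} (ρ : Measure (Ed d)) (f : Ed d → ℝ)
    (μ : SignedMeasure ↥Ω) : ℝ := (1 / 2) * L2sq ρ (fun x => Kop σ μ x - f x)

/-- Bregman divergence D_J^p(μ, ν) = J(μ) − J(ν) − ∫ p d(μ − ν). -/
def DJ {d : ℕ} {Ω : Set (Pd d)} (p : Pd d → ℝ) (μ ν : SignedMeasure ↥Ω) : ℝ :=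
  Jfun μ - Jfun ν - sInt (μ - ν) (fun w => p (w : Pd d))

/-! Write `r = f - Kν` and `q = f - Kμ†`. By Fubini, `∫ L_π φ d(ν - μ†) = ∫ φ · K(ν - μ†) dπ`, and
`K(ν - μ†) = q - r`; so the quantity in question is `∫ r (q - r) dρ^ε`, while orthogonality says
`∫ q (q - r) dρ = 0`, i.e. `∫ r q dρ = ‖q‖²`. Since `dρ^ε/dρ` is within `ε` of `1`,
`∫ g dρ^ε ≤ ∫ g dρ + ε ∫ |g| dρ`; for `g = r (q - r)`, Cauchy–Schwarz bounds this by
`‖q‖² - ‖r‖² + ε (‖r‖ ‖q‖ + ‖r‖²)`, which is negative as soon as `(1 + ε) ‖q‖ < (1 - ε) ‖r‖`. -/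

section SignedIntegral

variable {α : Type*} [MeasurableSpace α]

lemma MeasureTheory.SignedMeasure.posPart_add_eq_negPart_add_of_eq_sub {s : SignedMeasure α}
    {P Q : Measure α} [IsFiniteMeasure P] [IsFiniteMeasure Q]
    (h : s = P.toSignedMeasure - Q.toSignedMeasure) :
    s.toJordanDecomposition.posPart + Q = s.toJordanDecomposition.negPart + P := by
  rw [← Measure.toSignedMeasure_eq_toSignedMeasure_iff, Measure.toSignedMeasure_add,
    Measure.toSignedMeasure_add, add_comm _ P.toSignedMeasure, ← sub_eq_sub_iff_add_eq_add, ← h]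
  exact s.toSignedMeasure_toJordanDecomposition

lemma sInt_eq_of_eq_sub {s : SignedMeasure α} {P Q : Measure α} [IsFiniteMeasure P]
    [IsFiniteMeasure Q] (h : s = P.toSignedMeasure - Q.toSignedMeasure) {g : α → ℝ}
    (hg : StronglyMeasurable g) {C : ℝ} (hgC : ∀ a, ‖g a‖ ≤ C) :
    sInt s g = ∫ a, g a ∂P - ∫ a, g a ∂Q := by
  have hint : ∀ (R : Measure α) [IsFiniteMeasure R], Integrable g R := fun R _ =>
    .of_bound hg.aestronglyMeasurable C (.of_forall hgC)
  have := congrArg (∫ a, g a ∂·) (SignedMeasure.posPart_add_eq_negPart_add_of_eq_sub h)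
  simp only [integral_add_measure (hint _) (hint _)] at this
  unfold sInt
  linarith

lemma sInt_sub (ν μ : SignedMeasure α) {g : α → ℝ} (hg : StronglyMeasurable g) {C : ℝ}
    (hgC : ∀ a, ‖g a‖ ≤ C) : sInt (ν - μ) g = sInt ν g - sInt μ g := by
  have hint : ∀ (R : Measure α) [IsFiniteMeasure R], Integrable g R := fun R _ =>
    .of_bound hg.aestronglyMeasurable C (.of_forall hgC)
  have hdecomp : ν - μ
      = (ν.toJordanDecomposition.posPart + μ.toJordanDecomposition.negPart).toSignedMeasure
        - (ν.toJordanDecomposition.negPart + μ.toJordanDecomposition.posPart).toSignedMeasure := by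
    rw [Measure.toSignedMeasure_add, Measure.toSignedMeasure_add]
    conv_lhs => rw [← ν.toSignedMeasure_toJordanDecomposition,
      ← μ.toSignedMeasure_toJordanDecomposition]
    simp only [JordanDecomposition.toSignedMeasure]
    abel
  rw [sInt_eq_of_eq_sub hdecomp hg hgC, integral_add_measure (hint _) (hint _),
    integral_add_measure (hint _) (hint _)]
  unfold sInt
  ring

lemma norm_sInt_le (s : SignedMeasure α) {g : α → ℝ} {C : ℝ} (hgC : ∀ a, ‖g a‖ ≤ C) :
    ‖sInt s g‖ ≤ (s.toJordanDecomposition.posPart.real Set.univ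
      + s.toJordanDecomposition.negPart.real Set.univ) * C := by
  have hpos := norm_integral_le_of_norm_le_const
    (μ := s.toJordanDecomposition.posPart) (.of_forall hgC)
  have hneg := norm_integral_le_of_norm_le_const
    (μ := s.toJordanDecomposition.negPart) (.of_forall hgC)
  unfold sInt
  linarith [norm_sub_le (∫ a, g a ∂s.toJordanDecomposition.posPart)
    (∫ a, g a ∂s.toJordanDecomposition.negPart)]

end SignedIntegral

section Kernel

variable {α β : Type*} [MeasurableSpace α] [MeasurableSpace β] {k : α → β → ℝ} {B : β → ℝ}
  {π : Measure β} {φ : β → ℝ}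

lemma integrable_prod_mul_kernel (P : Measure α) [IsFiniteMeasure P] [SFinite π]
    (hk : StronglyMeasurable (Function.uncurry k)) (hkB : ∀ w x, ‖k w x‖ ≤ B x)
    (hφ : AEStronglyMeasurable φ π) (hφB : Integrable (fun x => φ x * B x) π) :
    Integrable (fun z : α × β => φ z.2 * k z.1 z.2) (P.prod π) := by
  refine (hφB.norm.comp_snd P).mono' (hφ.comp_snd.mul hk.aestronglyMeasurable) (.of_forall ?_)
  rintro ⟨w, x⟩
  rw [norm_mul, norm_mul]
  exact mul_le_mul_of_nonneg_left ((hkB w x).trans (Real.le_norm_self _)) (norm_nonneg _)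

lemma integral_integral_mul_kernel_swap (P : Measure α) [IsFiniteMeasure P] [SFinite π]
    (hk : StronglyMeasurable (Function.uncurry k)) (hkB : ∀ w x, ‖k w x‖ ≤ B x)
    (hφ : AEStronglyMeasurable φ π) (hφB : Integrable (fun x => φ x * B x) π) :
    ∫ w, ∫ x, φ x * k w x ∂π ∂P = ∫ x, φ x * ∫ w, k w x ∂P ∂π := by
  simp only [← integral_const_mul (φ _)]
  exact integral_integral_swap (integrable_prod_mul_kernel P hk hkB hφ hφB)

lemma integrable_mul_integral_kernel (P : Measure α) [IsFiniteMeasure P] [SFinite π]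
    (hk : StronglyMeasurable (Function.uncurry k)) (hkB : ∀ w x, ‖k w x‖ ≤ B x)
    (hφ : AEStronglyMeasurable φ π) (hφB : Integrable (fun x => φ x * B x) π) :
    Integrable (fun x => φ x * ∫ w, k w x ∂P) π := by
  simp only [← integral_const_mul (φ _)]
  exact (integrable_prod_mul_kernel P hk hkB hφ hφB).integral_prod_right

lemma sInt_integral_mul_kernel (s : SignedMeasure α) [SFinite π]
    (hk : StronglyMeasurable (Function.uncurry k)) (hkB : ∀ w x, ‖k w x‖ ≤ B x)
    (hφ : AEStronglyMeasurable φ π) (hφB : Integrable (fun x => φ x * B x) π) :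
    sInt s (fun w => ∫ x, φ x * k w x ∂π) = ∫ x, φ x * sInt s (fun w => k w x) ∂π := by
  unfold sInt
  rw [integral_integral_mul_kernel_swap _ hk hkB hφ hφB,
    integral_integral_mul_kernel_swap _ hk hkB hφ hφB,
    ← integral_sub (integrable_mul_integral_kernel _ hk hkB hφ hφB)
      (integrable_mul_integral_kernel _ hk hkB hφ hφB)]
  simp only [mul_sub]

lemma memLp_sInt_kernel (s : SignedMeasure α) (hk : StronglyMeasurable (Function.uncurry k))
    (hkB : ∀ w x, ‖k w x‖ ≤ B x) {p : ENNReal} (hB : MemLp B p π) :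
    MemLp (fun x => sInt s (fun w => k w x)) p π := by
  refine (hB.const_mul _).of_le ?_ (.of_forall fun x => (norm_sInt_le s (hkB · x)).trans
    (Real.le_norm_self _))
  exact (hk.integral_prod_left.sub hk.integral_prod_left).aestronglyMeasurable

end Kernel

lemma memLp_const_mul_one_add_norm {E : Type*} [NormedAddCommGroup E] [MeasurableSpace E]
    [OpensMeasurableSpace E] {π : Measure E} [IsFiniteMeasure π]
    (h2 : Integrable (fun x => ‖x‖ ^ 2) π) (C : ℝ) : MemLp (fun x => C * (1 + ‖x‖)) 2 π := by
  have hnorm : MemLp (fun x : E => ‖x‖) 2 π :=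
    (memLp_two_iff_integrable_sq continuous_norm.aestronglyMeasurable).2 h2
  exact ((memLp_const (1 : ℝ)).add hnorm).const_mul C

section Neuron

variable {d : ℕ} {σ : ℝ → ℝ} {Lσ : NNReal}

lemma abs_neuron_le (hσ : LipschitzWith Lσ σ) (w : Pd d) (x : Ed d) :
    |σ (⟪w.1, x⟫ + w.2)| ≤ (|σ 0| + Lσ * ‖w‖) * (1 + ‖x‖) := by
  have hlip : |σ (⟪w.1, x⟫ + w.2) - σ 0| ≤ Lσ * |⟪w.1, x⟫ + w.2| := by
    simpa [Real.dist_eq] using hσ.dist_le_mul (⟪w.1, x⟫ + w.2) 0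
  have harg : |⟪w.1, x⟫ + w.2| ≤ ‖w‖ * ‖x‖ + ‖w‖ :=
    calc |⟪w.1, x⟫ + w.2| ≤ ‖w.1‖ * ‖x‖ + |w.2| :=
          (abs_add_le _ _).trans (add_le_add_left (abs_real_inner_le_norm _ _) _)
      _ ≤ ‖w‖ * ‖x‖ + ‖w‖ :=
          add_le_add (mul_le_mul_of_nonneg_right (norm_fst_le w) (norm_nonneg x)) (norm_snd_le w)
  have hL : (0:ℝ) ≤ Lσ := Lσ.2
  nlinarith [abs_sub_abs_le_abs_sub (σ (⟪w.1, x⟫ + w.2)) (σ 0), mul_le_mul_of_nonneg_left harg hL,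
    mul_nonneg (abs_nonneg (σ 0)) (norm_nonneg x)]

variable {Ω : Set (Pd d)}

lemma stronglyMeasurable_neuron (hσ : LipschitzWith Lσ σ) :
    StronglyMeasurable (Function.uncurry fun (w : Ω) (x : Ed d) =>
      σ (⟪(w : Pd d).1, x⟫ + (w : Pd d).2)) :=
  (hσ.continuous.comp ((((continuous_subtype_val.comp continuous_fst).fst).inner continuous_snd).add
    (continuous_subtype_val.comp continuous_fst).snd)).stronglyMeasurable

lemma exists_norm_neuron_le (hσ : LipschitzWith Lσ σ) (hΩ : Bornology.IsBounded Ω) :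
    ∃ C, ∀ (w : Ω) (x : Ed d), ‖σ (⟪(w : Pd d).1, x⟫ + (w : Pd d).2)‖ ≤ C * (1 + ‖x‖) := by
  obtain ⟨R, hR⟩ := hΩ.exists_norm_le
  refine ⟨|σ 0| + Lσ * R, fun w x => ?_⟩
  rw [Real.norm_eq_abs]
  refine (abs_neuron_le hσ w x).trans ?_
  gcongr
  exact hR w w.2

lemma Kop_sub (hσ : LipschitzWith Lσ σ) (hΩ : Bornology.IsBounded Ω) (ν μ : SignedMeasure Ω)
    (x : Ed d) : Kop σ (ν - μ) x = Kop σ ν x - Kop σ μ x := by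
  obtain ⟨C, hC⟩ := exists_norm_neuron_le hσ hΩ
  exact sInt_sub ν μ (stronglyMeasurable_neuron hσ).of_uncurry_right (hC · x)

variable {π : Measure (Ed d)} [IsFiniteMeasure π]

lemma memLp_Kop (hσ : LipschitzWith Lσ σ) (hΩ : Bornology.IsBounded Ω)
    (h2 : Integrable (fun x => ‖x‖ ^ 2) π) (s : SignedMeasure Ω) : MemLp (Kop σ s) 2 π := by
  obtain ⟨C, hC⟩ := exists_norm_neuron_le hσ hΩ
  exact memLp_sInt_kernel s (stronglyMeasurable_neuron hσ) hC (memLp_const_mul_one_add_norm h2 C)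

lemma sInt_Lop (hσ : LipschitzWith Lσ σ) (hΩ : Bornology.IsBounded Ω)
    (h2 : Integrable (fun x => ‖x‖ ^ 2) π) (s : SignedMeasure Ω) {φ : Ed d → ℝ}
    (hφ : MemLp φ 2 π) :
    sInt s (fun w => Lop σ π φ (w : Pd d)) = ∫ x, φ x * Kop σ s x ∂π := by
  obtain ⟨C, hC⟩ := exists_norm_neuron_le hσ hΩ
  exact sInt_integral_mul_kernel s (stronglyMeasurable_neuron hσ) hC hφ.1
    (hφ.integrable_mul (memLp_const_mul_one_add_norm h2 C))

end Neuron

section DensityPerturbation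

variable {X : Type*} [MeasurableSpace X] {ρ ρε : Measure X} {ε : ℝ}

lemma integral_abs_mul_le_sqrt_mul_sqrt {r q : X → ℝ} (hr : MemLp r 2 ρ) (hq : MemLp q 2 ρ) :
    ∫ x, |r x * q x| ∂ρ ≤ √(∫ x, r x ^ 2 ∂ρ) * √(∫ x, q x ^ 2 ∂ρ) := by
  have h := integral_mul_le_Lp_mul_Lq_of_nonneg Real.HolderConjugate.two_two
    (f := fun x => |r x|) (g := fun x => |q x|) (.of_forall fun x => abs_nonneg _)
    (.of_forall fun x => abs_nonneg _) (by rw [ENNReal.ofReal_ofNat]; exact hr.abs)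
    (by rw [ENNReal.ofReal_ofNat]; exact hq.abs)
  simpa only [abs_mul, Real.rpow_two, sq_abs, Real.sqrt_eq_rpow] using h

lemma integral_le_integral_add_mul_integral_abs [SigmaFinite ρ]
    [SigmaFinite ρε] (hac : ρε ≪ ρ)
    (hdens : ∀ᵐ x ∂ρ, |1 - (ρε.rnDeriv ρ x).toReal| ≤ ε) {g : X → ℝ} (hg : Integrable g ρ) :
    ∫ x, g x ∂ρε ≤ ∫ x, g x ∂ρ + ε * ∫ x, |g x| ∂ρ := by
  have hDg : Integrable (fun x => (ρε.rnDeriv ρ x).toReal * g x) ρ := by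
    refine hg.bdd_mul (c := 1 + ε)
      (Measure.measurable_rnDeriv ρε ρ).ennreal_toReal.aestronglyMeasurable ?_
    filter_upwards [hdens] with x hx
    rw [Real.norm_of_nonneg ENNReal.toReal_nonneg]
    linarith [(abs_le.mp hx).1]
  rw [← integral_toReal_rnDeriv_mul hac, ← integral_const_mul,
    ← integral_add hg (hg.abs.const_mul ε)]
  refine integral_mono_ae hDg (hg.add (hg.abs.const_mul ε)) ?_
  filter_upwards [hdens] with x hx
  -- with D = dρε/dρ: D g = g - (1 - D) g ≤ g + |1 - D| |g|
  have := neg_abs_le ((1 - (ρε.rnDeriv ρ x).toReal) * g x)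
  rw [abs_mul] at this
  nlinarith [mul_le_mul_of_nonneg_right hx (abs_nonneg (g x))]

theorem integral_mul_sub_neg_of_abs_one_sub_rnDeriv_le [SigmaFinite ρ]
    [SigmaFinite ρε] (hac : ρε ≪ ρ) (hε : 0 ≤ ε) (hε1 : ε < 1)
    (hdens : ∀ᵐ x ∂ρ, |1 - (ρε.rnDeriv ρ x).toReal| ≤ ε) {r q : X → ℝ}
    (hr : MemLp r 2 ρ) (hq : MemLp q 2 ρ) (horth : ∫ x, q x * (q x - r x) ∂ρ = 0)
    (hlt : (1 + ε) / (1 - ε) * √(∫ x, q x ^ 2 ∂ρ) < √(∫ x, r x ^ 2 ∂ρ)) :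
    ∫ x, r x * (q x - r x) ∂ρε < 0 := by
  set t := √(∫ x, r x ^ 2 ∂ρ)
  set s := √(∫ x, q x ^ 2 ∂ρ)
  have ht2 : ∫ x, r x ^ 2 ∂ρ = t ^ 2 := (Real.sq_sqrt (integral_nonneg fun x => sq_nonneg _)).symm
  have hs2 : ∫ x, q x ^ 2 ∂ρ = s ^ 2 := (Real.sq_sqrt (integral_nonneg fun x => sq_nonneg _)).symm
  have hrq : Integrable (fun x => r x * q x) ρ := hr.integrable_mul hq
  have hrr : Integrable (fun x => r x ^ 2) ρ := hr.integrable_sq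
  have hint : Integrable (fun x => r x * (q x - r x)) ρ := hr.integrable_mul (hq.sub hr)
  have hmean : ∫ x, r x * (q x - r x) ∂ρ = s ^ 2 - t ^ 2 := by
    have hq' : ∫ x, q x * (q x - r x) ∂ρ = ∫ x, q x ^ 2 ∂ρ - ∫ x, r x * q x ∂ρ := by
      simp only [mul_sub, ← sq, mul_comm (q _) (r _)]
      exact integral_sub hq.integrable_sq hrq
    simp only [mul_sub, ← sq]
    rw [integral_sub hrq hrr]
    linarith
  have habs : ∫ x, |r x * (q x - r x)| ∂ρ ≤ t * s + t ^ 2 := by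
    calc ∫ x, |r x * (q x - r x)| ∂ρ ≤ ∫ x, (|r x * q x| + r x ^ 2) ∂ρ := by
          refine integral_mono hint.abs (hrq.abs.add hrr) fun x => ?_
          have := abs_sub (r x * q x) (r x ^ 2)
          rw [abs_of_nonneg (sq_nonneg (r x))] at this
          rwa [mul_sub, ← sq]
      _ ≤ t * s + t ^ 2 := by
          rw [integral_add hrq.abs hrr, ht2]
          linarith [integral_abs_mul_le_sqrt_mul_sqrt hr hq]
  have hgap : (1 + ε) * s < (1 - ε) * t := by
    rwa [div_mul_eq_mul_div, div_lt_iff₀ (by linarith), mul_comm t] at hlt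
  have hs0 : 0 ≤ s := Real.sqrt_nonneg _
  have ht0 : 0 < t := by nlinarith
  have hst : s ≤ t := by nlinarith
  calc ∫ x, r x * (q x - r x) ∂ρε ≤ (s ^ 2 - t ^ 2) + ε * (t * s + t ^ 2) := by
        rw [← hmean]
        linarith [integral_le_integral_add_mul_integral_abs hac hdens hint,
          mul_le_mul_of_nonneg_left habs hε]
    _ < 0 := by nlinarith [mul_le_mul_of_nonneg_left hst hs0, mul_lt_mul_of_pos_left hgap ht0]

end DensityPerturbation

theorem radon_nikodym_strict_descent_general
    {d : ℕ} (Ω : Set (Pd d)) (hΩ : IsCompact Ω)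
    (ρ : Measure (Ed d)) [IsProbabilityMeasure ρ]
    (hρ2 : Integrable (fun x : Ed d => ‖x‖ ^ 2) ρ)
    (ρε : Measure (Ed d)) [IsProbabilityMeasure ρε]
    (hρε2 : Integrable (fun x : Ed d => ‖x‖ ^ 2) ρε)
    (hac : ρε ≪ ρ) (ε : ℝ) (hε : 0 < ε) (hε1 : ε < 1)
    (hdens : ∀ᵐ x ∂ρ, |1 - (ρε.rnDeriv ρ x).toReal| ≤ ε)
    (σ : ℝ → ℝ) (Lσ : NNReal) (hσ : LipschitzWith Lσ σ)
    (f : Ed d → ℝ) (hf2 : MemLp f 2 ρ) (hf2' : MemLp f 2 ρε)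
    (μdag : SignedMeasure ↥Ω)
    (horth : ∀ w ∈ Ω, Lop σ ρ (fun x => f x - Kop σ μdag x) w = 0) :
    ∀ ν : SignedMeasure ↥Ω,
      (1 + ε) / (1 - ε) * L2norm ρ (fun x => f x - Kop σ μdag x) <
          L2norm ρ (fun x => f x - Kop σ ν x) →
        sInt (ν - μdag) (fun w => Lop σ ρε (fun x => f x - Kop σ ν x) (w : Pd d)) < 0 := by
  intro ν hlt
  have hΩb := hΩ.isBounded
  set r : Ed d → ℝ := fun x => f x - Kop σ ν x with hr_def
  set q : Ed d → ℝ := fun x => f x - Kop σ μdag x with hq_def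
  have hK : ∀ x, Kop σ (ν - μdag) x = q x - r x := fun x => by
    rw [Kop_sub hσ hΩb, hr_def, hq_def]
    ring
  have hr : MemLp r 2 ρ := hf2.sub (memLp_Kop hσ hΩb hρ2 ν)
  have hr' : MemLp r 2 ρε := hf2'.sub (memLp_Kop hσ hΩb hρε2 ν)
  have hq : MemLp q 2 ρ := hf2.sub (memLp_Kop hσ hΩb hρ2 μdag)
  have horth' : ∫ x, q x * (q x - r x) ∂ρ = 0 := by
    simp only [← hK, ← sInt_Lop hσ hΩb hρ2 (ν - μdag) hq, horth _ (Subtype.property _)]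
    simp [sInt]
  rw [sInt_Lop hσ hΩb hρε2 (ν - μdag) hr']
  simp only [hK]
  exact integral_mul_sub_neg_of_abs_one_sub_rnDeriv_le hac hε.le hε1 hdens hr hq horth' hlt

/-- If ρ^ε ≪ ρ with ‖1 − dρ^ε/dρ‖_{L^∞(ρ)} ≤ ε, 0 < ε < 1, and μ† satisfies
the orthogonality condition for ρ, then for every ν the quantity
∫_Ω L_{ρ^ε}(f − Kν) d(ν − μ†) is strictly negative whenever
‖f − Kν‖_{L²(ρ)} > ((1+ε)/(1−ε))‖f − Kμ†‖_{L²(ρ)}. -/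
theorem radon_nikodym_strict_descent
    {d : ℕ} (Ω : Set (Pd d)) (hΩ : IsCompact Ω)
    (ρ : Measure (Ed d)) [IsProbabilityMeasure ρ]
    (hρ2 : Integrable (fun x : Ed d => ‖x‖ ^ 2) ρ)
    (ρε : Measure (Ed d)) [IsProbabilityMeasure ρε]
    (hρε2 : Integrable (fun x : Ed d => ‖x‖ ^ 2) ρε)
    (hac : ρε ≪ ρ) (ε : ℝ) (hε : 0 < ε) (hε1 : ε < 1)
    (hdens : ∀ᵐ x ∂ρ, |1 - (ρε.rnDeriv ρ x).toReal| ≤ ε)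
    (σ : ℝ → ℝ) (Lσ : NNReal) (hσ : LipschitzWith Lσ σ)
    (f : Ed d → ℝ) (hfm : Measurable f) (hf2 : MemLp f 2 ρ) (hf2' : MemLp f 2 ρε)
    (μdag : SignedMeasure ↥Ω)
    (horth : ∀ w ∈ Ω, Lop σ ρ (fun x => f x - Kop σ μdag x) w = 0) :
    ∀ ν : SignedMeasure ↥Ω,
      (1 + ε) / (1 - ε) * L2norm ρ (fun x => f x - Kop σ μdag x) <
          L2norm ρ (fun x => f x - Kop σ ν x) →
        sInt (ν - μdag) (fun w => Lop σ ρε (fun x => f x - Kop σ ν x) (w : Pd d)) < 0 :=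
  radon_nikodym_strict_descent_general Ω hΩ ρ hρ2 ρε hρε2 hac ε hε hε1 hdens σ Lσ hσ f hf2 hf2' μdag
    horth

end
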